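/- (Divergence of the inverse-metric rows.) Let G : ℝ^m → ℝ^{m×m} be smooth with G(w) symmetric positive definite and ∂_j G_{k,ℓ} = ∂_k G_{j,ℓ} for all indices (total symmetry in the first two indices). Then for each i, Σ_{j=1}^m ∂_j (G⁻¹)_{ij} = − Σ_{k=1}^m (G⁻¹)_{ik} ∂_k log det G = −(G⁻¹ ∇ log det G)_i. -/

import Mathlib

open Matrix
open scoped BigOperators

attribute [local instance] Matrix.linftyOpNormedRing Matrix.linftyOpNormedAlgebra

variable {m : ℕ}

theorem hasDerivAt_matrix {M : ℝ → Matrix (Fin m) (Fin m) ℝ}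
    {M' : Matrix (Fin m) (Fin m) ℝ} {t : ℝ}
    (h : ∀ k l, HasDerivAt (fun s => M s k l) (M' k l) t) :
    HasDerivAt M M' t := by
  have hM : M = fun s => ∑ k : Fin m, ∑ l : Fin m,
      (M s k l) • Matrix.single k l (1:ℝ) := by
    funext s
    conv_lhs => rw [matrix_eq_sum_single (M s)]
    refine Finset.sum_congr rfl fun k _ => Finset.sum_congr rfl fun l _ => ?_
    rw [Matrix.smul_single, smul_eq_mul, mul_one]
  have hM' : M' = ∑ k : Fin m, ∑ l : Fin m,
      (M' k l) • Matrix.single k l (1:ℝ) := by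
    conv_lhs => rw [matrix_eq_sum_single M']
    refine Finset.sum_congr rfl fun k _ => Finset.sum_congr rfl fun l _ => ?_
    rw [Matrix.smul_single, smul_eq_mul, mul_one]
  rw [hM', hM]
  exact HasDerivAt.fun_sum fun k _ => HasDerivAt.fun_sum fun l _ => (h k l).smul_const (Matrix.single k l (1:ℝ))

theorem hasDerivAt_det {M : ℝ → Matrix (Fin m) (Fin m) ℝ}
    {M' A : Matrix (Fin m) (Fin m) ℝ} {t : ℝ}
    (h : ∀ k l, HasDerivAt (fun s => M s k l) (M' k l) t) (hA : M t = A) :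
    HasDerivAt (fun s => (M s).det) ((Matrix.adjugate A * M').trace) t := by
  subst hA
  have key : HasDerivAt (fun s => (M s).det)
      (∑ σ : Equiv.Perm (Fin m), ((Equiv.Perm.sign σ : ℤ) : ℝ) *
        ∑ i, (∏ j ∈ Finset.univ.erase i, M t (σ j) j) • M' (σ i) i) t := by
    simp only [Matrix.det_apply']
    exact HasDerivAt.fun_sum fun (σ : Equiv.Perm (Fin m)) _ =>
      (HasDerivAt.fun_finsetProd (f := fun i s => M s (σ i) i) fun i _ => h (σ i) i).const_mul _
  convert key using 1
  have hcol : ∀ i : Fin m, (Matrix.updateCol (M t) i fun r => M' r i).det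
      = ∑ σ : Equiv.Perm (Fin m), ((Equiv.Perm.sign σ : ℤ) : ℝ) *
          ((∏ j ∈ Finset.univ.erase i, M t (σ j) j) * M' (σ i) i) := by
    intro i
    rw [Matrix.det_apply']
    refine Finset.sum_congr rfl fun σ _ => ?_
    congr 1
    rw [← Finset.mul_prod_erase Finset.univ _ (Finset.mem_univ i),
      Matrix.updateCol_self, mul_comm]
    congr 1
    refine Finset.prod_congr rfl fun j hj => ?_
    rw [Matrix.updateCol_ne (Finset.ne_of_mem_erase hj)]
  have htr : (Matrix.adjugate (M t) * M').trace
      = ∑ i, (Matrix.updateCol (M t) i fun r => M' r i).det := by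
    rw [Matrix.trace]
    refine Finset.sum_congr rfl fun i _ => ?_
    have h2 := congrFun (Matrix.cramer_eq_adjugate_mulVec (M t) (fun r => M' r i)) i
    rw [Matrix.cramer_apply] at h2
    rw [Matrix.diag_apply, Matrix.mul_apply, h2]
    simp [Matrix.mulVec, dotProduct]
  rw [htr]
  simp only [hcol]
  rw [Finset.sum_comm]
  refine Finset.sum_congr rfl fun σ _ => ?_
  rw [Finset.mul_sum]
  refine Finset.sum_congr rfl fun i _ => ?_
  rw [smul_eq_mul]

theorem hasDerivAt_log_det {M : ℝ → Matrix (Fin m) (Fin m) ℝ}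
    {M' A : Matrix (Fin m) (Fin m) ℝ} {t : ℝ}
    (h : ∀ k l, HasDerivAt (fun s => M s k l) (M' k l) t) (hA : M t = A)
    (hpos : A.PosDef) :
    HasDerivAt (fun s => Real.log (M s).det) ((A⁻¹ * M').trace) t := by
  have h0 : A.det ≠ 0 := ne_of_gt hpos.det_pos
  have hdet := (hasDerivAt_det h hA).log (by rw [hA]; exact h0)
  rw [hA] at hdet
  convert hdet using 1
  rw [Matrix.inv_def, Ring.inverse_eq_inv, Matrix.smul_mul, Matrix.trace_smul,
    smul_eq_mul, div_eq_inv_mul, mul_comm]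

noncomputable def entryCLM (i j : Fin m) : Matrix (Fin m) (Fin m) ℝ →L[ℝ] ℝ :=
  LinearMap.toContinuousLinearMap
    { toFun := fun A => A i j
      map_add' := fun _ _ => rfl
      map_smul' := fun _ _ => rfl }

theorem hasDerivAt_inv_entry {M : ℝ → Matrix (Fin m) (Fin m) ℝ}
    {M' A : Matrix (Fin m) (Fin m) ℝ} {t : ℝ}
    (h : ∀ k l, HasDerivAt (fun s => M s k l) (M' k l) t) (hA : M t = A)
    (hu : IsUnit A) (i j : Fin m) :
    HasDerivAt (fun s => (M s)⁻¹ i j) ((-(A⁻¹ * M' * A⁻¹)) i j) t := by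
  obtain ⟨u, rfl⟩ := hu
  have hf : HasFDerivAt (Ring.inverse : Matrix (Fin m) (Fin m) ℝ → _)
      (-(ContinuousLinearMap.mulLeftRight ℝ _ ↑u⁻¹ ↑u⁻¹)) (M t) := by
    rw [hA]; exact hasFDerivAt_ringInverse u
  have hinv' : HasDerivAt (fun s => (M s)⁻¹)
      (-(((u : Matrix (Fin m) (Fin m) ℝ))⁻¹ * M' * ((u : Matrix (Fin m) (Fin m) ℝ))⁻¹)) t := by
    have := hf.comp_hasDerivAt t (hasDerivAt_matrix h)
    simp only [Function.comp_def, ← Matrix.nonsing_inv_eq_ringInverse] at this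
    exact this.congr_deriv (by simp)
  have hfin := (entryCLM i j).hasFDerivAt.comp_hasDerivAt t hinv'
  exact hfin


/-- divergence of the inverse-metric rows. If `G(w)` is a smooth field
of symmetric positive-definite matrices whose entry-derivatives `dG w j k l =
∂_{w_j} G_{kl}(w)` are totally symmetric in the first two indices
(`∂_j G_{kl} = ∂_k G_{jl}`), then
`Σ_j ∂_j (G⁻¹)_{ij} = −Σ_k (G⁻¹)_{ik} ∂_k log det G = −(G⁻¹ ∇ log det G)_i`. -/
theorem stmt18 {m : ℕ} (G : (Fin m → ℝ) → Matrix (Fin m) (Fin m) ℝ)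
    (hsm : ∀ k l : Fin m, ContDiff ℝ (⊤ : ℕ∞) (fun w => G w k l))
    (hpd : ∀ w, (G w).PosDef)
    (dG : (Fin m → ℝ) → Fin m → Matrix (Fin m) (Fin m) ℝ)
    (hdG : ∀ (w : Fin m → ℝ) (j k l : Fin m),
      HasDerivAt (fun t : ℝ => G (Function.update w j t) k l) (dG w j k l) (w j))
    (hsym : ∀ (w : Fin m → ℝ) (j k l : Fin m), dG w j k l = dG w k j l) :
    ∀ (w : Fin m → ℝ) (i : Fin m),
      (∑ j, deriv (fun t : ℝ => (G (Function.update w j t))⁻¹ i j) (w j))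
        = -∑ k, (G w)⁻¹ i k
            * deriv (fun t : ℝ => Real.log (G (Function.update w k t)).det) (w k) := by
  intro w i
  have hw : ∀ j : Fin m, G (Function.update w j (w j)) = G w := by
    intro j; rw [Function.update_eq_self]
  have hu : IsUnit (G w) :=
    (Matrix.isUnit_iff_isUnit_det _).mpr (isUnit_iff_ne_zero.mpr (ne_of_gt (hpd w).det_pos))
  set N := (G w)⁻¹ with hN
  have hL : ∀ j : Fin m, deriv (fun t : ℝ => (G (Function.update w j t))⁻¹ i j) (w j)
      = (-(N * dG w j * N)) i j := by
    intro j
    exact (hasDerivAt_inv_entry (fun k l => hdG w j k l) (hw j) hu i j).deriv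
  have hR : ∀ k : Fin m, deriv (fun t : ℝ => Real.log (G (Function.update w k t)).det) (w k)
      = (N * dG w k).trace := by
    intro k
    exact (hasDerivAt_log_det (fun a b => hdG w k a b) (hw k) (hpd w)).deriv
  simp only [hL, hR]
  simp only [Matrix.neg_apply, Matrix.mul_apply, Matrix.trace, Matrix.diag_apply]
  have step : ∀ x : Fin m, -(∑ b, (∑ a, N i a * dG w x a b) * N b x)
      = ∑ b, ∑ a, -(N i a * (N b x * dG w a x b)) := by
    intro x
    rw [← Finset.sum_neg_distrib]
    refine Finset.sum_congr rfl fun b _ => ?_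
    rw [Finset.sum_mul, ← Finset.sum_neg_distrib]
    refine Finset.sum_congr rfl fun a _ => ?_
    rw [hsym w x a b]; ring
  simp only [step]
  have swap1 : (∑ x : Fin m, ∑ b : Fin m, ∑ a : Fin m, -(N i a * (N b x * dG w a x b)))
      = ∑ a : Fin m, ∑ b : Fin m, ∑ x : Fin m, -(N i a * (N b x * dG w a x b)) := by
    rw [Finset.sum_comm]
    rw [show (∑ b : Fin m, ∑ x : Fin m, ∑ a : Fin m, -(N i a * (N b x * dG w a x b)))
        = ∑ b : Fin m, ∑ a : Fin m, ∑ x : Fin m, -(N i a * (N b x * dG w a x b)) from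
      Finset.sum_congr rfl fun b _ => Finset.sum_comm]
    exact Finset.sum_comm
  rw [swap1]
  rw [← Finset.sum_neg_distrib]
  refine Finset.sum_congr rfl fun a _ => ?_
  rw [Finset.mul_sum, ← Finset.sum_neg_distrib]
  refine Finset.sum_congr rfl fun b _ => ?_
  rw [Finset.mul_sum, ← Finset.sum_neg_distrib]
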